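/- arXiv:math/0604390 — 3 statements merged into one kernel-verified Lean document; each statement's English description precedes it below -/
import Mathlib

section
/- Let V be a finite-dimensional real vector space with dim V ≥ 2 and let T : V × V → V be a symmetric bilinear map such that for every v ∈ V, T(v, v) is a scalar multiple of v. Then there exists a linear functional φ : V → ℝ such that T(u, v) = φ(u) • v + φ(v) • u for all u, v ∈ V. -/
/-- A symmetric bilinear map `T` on a real vector space of dimension `≥ 2`
with `T(v,v)` always proportional to `v` has the Weyl form
`T(u,v) = φ(u) • v + φ(v) • u`. -/
theorem symm_bilinear_pointwise_proportional_is_weyl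
    (V : Type*) [AddCommGroup V] [Module ℝ V] [FiniteDimensional ℝ V]
    (hdim : 2 ≤ Module.finrank ℝ V)
    (T : V →ₗ[ℝ] V →ₗ[ℝ] V)
    (hsymm : ∀ u v : V, T u v = T v u)
    (hprop : ∀ v : V, ∃ c : ℝ, T v v = c • v) :
    ∃ φ : V →ₗ[ℝ] ℝ, ∀ u v : V, T u v = φ u • v + φ v • u := by
  classical
  set c : V → ℝ := fun v => (hprop v).choose with hcdef
  have hc : ∀ v : V, T v v = c v • v := fun v => (hprop v).choose_spec
  -- basic expansion
  have expand : ∀ x y : V, T (x + y) (x + y) = T x x + (2:ℝ) • T x y + T y y := by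
    intro x y
    simp only [map_add, LinearMap.add_apply]
    rw [hsymm y x]
    module
  -- cancel nonzero vector
  have cancel : ∀ (v : V), v ≠ 0 → ∀ a b : ℝ, a • v = b • v → a = b := by
    intro v hv a b hab
    have h : (a - b) • v = 0 := by rw [sub_smul, hab, sub_self]
    exact sub_eq_zero.mp ((smul_eq_zero.mp h).resolve_right hv)
  -- homogeneity of c
  have hhom : ∀ (t : ℝ) (v : V), v ≠ 0 → t ≠ 0 → c (t • v) = t * c v := by
    intro t v hv ht
    have h1 : T (t • v) (t • v) = (t * (t * c v)) • v := by
      simp only [map_smul, LinearMap.smul_apply, hc v, smul_smul]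
    have h2 : T (t • v) (t • v) = (c (t • v) * t) • v := by
      rw [hc (t • v), smul_smul]
    have h3 := cancel v hv _ _ (h2.symm.trans h1)
    apply mul_right_cancel₀ ht
    linear_combination h3
  -- additivity of c on linearly independent pairs
  have haddind : ∀ u v : V, LinearIndependent ℝ ![u, v] → c (u + v) = c u + c v := by
    intro u v hind
    have eq1 : c (u + v) • (u + v) = c u • u + c v • v + (2:ℝ) • T u v := by
      rw [← hc, expand, hc, hc]; abel
    have h4 : T ((2:ℝ) • v) ((2:ℝ) • v) = (4 * c v) • v := by
      simp only [map_smul, LinearMap.smul_apply, hc v, smul_smul]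
      ring_nf
    have h3 : T u ((2:ℝ) • v) = (2:ℝ) • T u v := by simp [map_smul]
    have eq2 : c (u + (2:ℝ) • v) • (u + (2:ℝ) • v)
        = c u • u + (4 * c v) • v + (4:ℝ) • T u v := by
      rw [← hc, expand, hc u, h3, h4]
      module
    have key : (2 * c (u + v) - c (u + (2:ℝ) • v) - c u) • u
        + (2 * c (u + v) - 2 * c (u + (2:ℝ) • v) + 2 * c v) • v = 0 := by
      linear_combination (norm := module) (2:ℝ) • eq1 - eq2
    obtain ⟨h1, h2⟩ := hind.eq_zero_of_pair key
    linarith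
  -- define φ
  set φ : V → ℝ := fun v => if v = 0 then 0 else c v / 2 with hφdef
  have hφ0 : φ 0 = 0 := by simp [hφdef]
  have hTφ : ∀ v : V, T v v = (2 * φ v) • v := by
    intro v
    by_cases hv : v = 0
    · simp [hv]
    · rw [hc v]
      simp only [hφdef, if_neg hv]
      ring_nf
  have hφsmul : ∀ (t : ℝ) (v : V), φ (t • v) = t * φ v := by
    intro t v
    by_cases hv : v = 0
    · simp [hv, hφ0]
    by_cases ht : t = 0
    · simp [ht, hφ0]
    have htv : t • v ≠ 0 := smul_ne_zero ht hv
    simp only [hφdef, if_neg htv, if_neg hv, hhom t v hv ht]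
    ring
  have hφadd : ∀ u v : V, φ (u + v) = φ u + φ v := by
    intro u v
    by_cases hu : u = 0
    · simp [hu, hφ0]
    by_cases hv : v = 0
    · simp [hv, hφ0]
    by_cases hdep : ∃ a : ℝ, a • v = u
    · obtain ⟨a, ha⟩ := hdep
      have huv : u + v = (a + 1) • v := by rw [← ha]; module
      by_cases ha1 : a + 1 = 0
      · have ha' : a = -1 := by linarith
        rw [huv, ha1, zero_smul, hφ0, ← ha, hφsmul, ha']
        ring
      · rw [huv, hφsmul, ← ha, hφsmul]
        ring
    · push_neg at hdep
      have hind : LinearIndependent ℝ ![u, v] := by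
        rw [linearIndependent_fin2]
        exact ⟨hv, fun a => hdep a⟩
      have huv : u + v ≠ 0 := by
        intro h
        have h' : (1:ℝ) • u + (1:ℝ) • v = 0 := by simpa using h
        obtain ⟨h1, _⟩ := hind.eq_zero_of_pair h'
        exact one_ne_zero h1
      simp only [hφdef, if_neg huv, if_neg hu, if_neg hv, haddind u v hind]
      ring
  refine ⟨{ toFun := φ, map_add' := hφadd,
            map_smul' := fun t v => by simpa using hφsmul t v }, fun u v => ?_⟩
  show T u v = φ u • v + φ v • u
  have h2 : (2:ℝ) • T u v = (2:ℝ) • (φ u • v + φ v • u) := by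
    have e := expand u v
    rw [hTφ, hTφ, hTφ, hφadd] at e
    linear_combination (norm := module) -e
  exact smul_right_injective V (two_ne_zero (α := ℝ)) h2
end

section
/- Let m, n ≥ 1 and let Γ, Γ' be Christoffel symbols on Fin (n+m) (torsion-free: symmetric in the outer lower indices). Suppose Γ and Γ' satisfy the n-Grassmannian equivalence relations: (i) Γ_λ^k_ξ = Γ'_λ^k_ξ; (ii) δ^β_ξ (Γ_λ^k_i - Γ'_λ^k_i) + δ^β_λ (Γ_i^k_ξ - Γ'_i^k_ξ) = δ^k_i (Γ_λ^β_ξ - Γ'_λ^β_ξ); (iii) 2 δ^β_λ δ^α_ξ (Γ_j^k_i - Γ'_j^k_i) = δ^α_ξ δ^k_j (Γ_λ^β_i - Γ'_λ^β_i) + δ^k_j δ^α_λ (Γ_i^β_ξ - Γ'_i^β_ξ) + δ^α_ξ δ^k_i (Γ_λ^β_j - Γ'_λ^β_j) + δ^k_i δ^α_λ (Γ_j^β_ξ - Γ'_j^β_ξ); (iv) Γ_j^β_i = Γ'_j^β_i; for all Greek indices λ, ξ, α, β ∈ Fin n and Latin indices i, j, k ranging over the last m indices. Then for every u : Fin m →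 Fin n → ℝ and all k, λ, ξ, the polynomial expressions P[Γ]^k_{λξ}(u) = Γ_λ^k_ξ + ∑_i Γ_λ^k_i u^i_ξ + ∑_j Γ_j^k_ξ u^j_λ + ∑_{i,j} Γ_j^k_i u^j_λ u^i_ξ - ∑_β u^k_β (Γ_λ^β_ξ + ∑_i Γ_λ^β_i u^i_ξ + ∑_j Γ_j^β_ξ u^j_λ + ∑_{i,j} Γ_j^β_i u^j_λ u^i_ξ) satisfy P[Γ]^k_{λξ}(u) = P[Γ']^k_{λξ}(u), i.e. the two connections define the same equation of unparametrized n-dimensional totally geodesic submanifolds. -/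
def kdelta {l : ℕ} (C A : Fin l) : ℝ := if C = A then 1 else 0

/-- The polynomial `P[Γ]^k_{λξ}(u)` appearing in the equation of unparametrized
totally geodesic submanifolds `u^k_{λξ} + P[Γ]^k_{λξ} = 0`. -/
def P (n m : ℕ) (Γ : Fin (n + m) → Fin (n + m) → Fin (n + m) → ℝ)
    (u : Fin m → Fin n → ℝ) (k : Fin m) (lam ξ : Fin n) : ℝ :=
  Γ (Fin.castAdd m lam) (Fin.natAdd n k) (Fin.castAdd m ξ)
    + ∑ i, Γ (Fin.castAdd m lam) (Fin.natAdd n k) (Fin.natAdd n i) * u i ξ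
    + ∑ j, Γ (Fin.natAdd n j) (Fin.natAdd n k) (Fin.castAdd m ξ) * u j lam
    + ∑ j, ∑ i, Γ (Fin.natAdd n j) (Fin.natAdd n k) (Fin.natAdd n i) * u j lam * u i ξ
    - ∑ β, u k β *
        (Γ (Fin.castAdd m lam) (Fin.castAdd m β) (Fin.castAdd m ξ)
          + ∑ i, Γ (Fin.castAdd m lam) (Fin.castAdd m β) (Fin.natAdd n i) * u i ξ
          + ∑ j, Γ (Fin.natAdd n j) (Fin.castAdd m β) (Fin.castAdd m ξ) * u j lam
          + ∑ j, ∑ i, Γ (Fin.natAdd n j) (Fin.castAdd m β) (Fin.natAdd n i) * u j lam * u i ξ)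

/-- Connections related by the n-Grassmannian equivalence relations define the
same equation of unparametrized totally geodesic submanifolds. -/
theorem grassmannian_relations_imply_same_geodesic_equation
    (n m : ℕ) (hn : 1 ≤ n) (hm : 1 ≤ m)
    (Γ Γ' : Fin (n + m) → Fin (n + m) → Fin (n + m) → ℝ)
    (hsym : ∀ A B C, Γ A C B = Γ B C A)
    (hsym' : ∀ A B C, Γ' A C B = Γ' B C A)
    (h1 : ∀ (lam ξ : Fin n) (k : Fin m),
      Γ (Fin.castAdd m lam) (Fin.natAdd n k) (Fin.castAdd m ξ) =
      Γ' (Fin.castAdd m lam) (Fin.natAdd n k) (Fin.castAdd m ξ))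
    (h2 : ∀ (lam ξ β : Fin n) (k i : Fin m),
      kdelta β ξ * (Γ (Fin.castAdd m lam) (Fin.natAdd n k) (Fin.natAdd n i)
                    - Γ' (Fin.castAdd m lam) (Fin.natAdd n k) (Fin.natAdd n i))
        + kdelta β lam * (Γ (Fin.natAdd n i) (Fin.natAdd n k) (Fin.castAdd m ξ)
                    - Γ' (Fin.natAdd n i) (Fin.natAdd n k) (Fin.castAdd m ξ)) =
      kdelta k i * (Γ (Fin.castAdd m lam) (Fin.castAdd m β) (Fin.castAdd m ξ)
                    - Γ' (Fin.castAdd m lam) (Fin.castAdd m β) (Fin.castAdd m ξ)))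
    (h3 : ∀ (lam ξ α β : Fin n) (i j k : Fin m),
      2 * kdelta β lam * kdelta α ξ *
          (Γ (Fin.natAdd n j) (Fin.natAdd n k) (Fin.natAdd n i)
            - Γ' (Fin.natAdd n j) (Fin.natAdd n k) (Fin.natAdd n i)) =
        kdelta α ξ * kdelta k j *
          (Γ (Fin.castAdd m lam) (Fin.castAdd m β) (Fin.natAdd n i)
            - Γ' (Fin.castAdd m lam) (Fin.castAdd m β) (Fin.natAdd n i))
        + kdelta k j * kdelta α lam *
          (Γ (Fin.natAdd n i) (Fin.castAdd m β) (Fin.castAdd m ξ)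
            - Γ' (Fin.natAdd n i) (Fin.castAdd m β) (Fin.castAdd m ξ))
        + kdelta α ξ * kdelta k i *
          (Γ (Fin.castAdd m lam) (Fin.castAdd m β) (Fin.natAdd n j)
            - Γ' (Fin.castAdd m lam) (Fin.castAdd m β) (Fin.natAdd n j))
        + kdelta k i * kdelta α lam *
          (Γ (Fin.natAdd n j) (Fin.castAdd m β) (Fin.castAdd m ξ)
            - Γ' (Fin.natAdd n j) (Fin.castAdd m β) (Fin.castAdd m ξ)))
    (h4 : ∀ (β : Fin n) (i j : Fin m),
      Γ (Fin.natAdd n j) (Fin.castAdd m β) (Fin.natAdd n i) =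
      Γ' (Fin.natAdd n j) (Fin.castAdd m β) (Fin.natAdd n i)) :
    ∀ (u : Fin m → Fin n → ℝ) (k : Fin m) (lam ξ : Fin n),
      P n m Γ u k lam ξ = P n m Γ' u k lam ξ := by

  intro u k lam ξ
  set i0 : Fin m := ⟨0, hm⟩ with hi0
  set l0 : Fin n := ⟨0, hn⟩ with hl0
  -- the one-form components
  set φ : Fin n → ℝ := fun l =>
    (Γ (Fin.castAdd m l) (Fin.castAdd m l) (Fin.castAdd m l)
      - Γ' (Fin.castAdd m l) (Fin.castAdd m l) (Fin.castAdd m l)) / 2 with hφ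
  set E : Fin m → ℝ := fun i =>
    Γ (Fin.natAdd n i0) (Fin.natAdd n i0) (Fin.natAdd n i)
      - Γ' (Fin.natAdd n i0) (Fin.natAdd n i0) (Fin.natAdd n i) with hE0
  set ψ : Fin m → ℝ := fun i => E i - kdelta i0 i * (E i0 / 2) with hψ
  have hdd : ∀ (a : Fin n), kdelta a a = (1:ℝ) := fun a => by simp [kdelta]
  have hdd' : ∀ (a : Fin m), kdelta a a = (1:ℝ) := fun a => by simp [kdelta]
  -- Γλ^k_i = Γ'λ^k_i + δ^k_i φ_λ
  have hA : ∀ (l : Fin n) (k' i : Fin m),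
      Γ (Fin.castAdd m l) (Fin.natAdd n k') (Fin.natAdd n i)
        = Γ' (Fin.castAdd m l) (Fin.natAdd n k') (Fin.natAdd n i) + kdelta k' i * φ l := by
    intro l k' i
    have h := h2 l l l k' i
    rw [hdd] at h
    have s1 := hsym (Fin.natAdd n i) (Fin.castAdd m l) (Fin.natAdd n k')
    have s2 := hsym' (Fin.natAdd n i) (Fin.castAdd m l) (Fin.natAdd n k')
    simp only [hφ]
    linear_combination h / 2 - s1 / 2 + s2 / 2
  have hB : ∀ (l : Fin n) (k' j : Fin m),
      Γ (Fin.natAdd n j) (Fin.natAdd n k') (Fin.castAdd m l)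
        = Γ' (Fin.natAdd n j) (Fin.natAdd n k') (Fin.castAdd m l) + kdelta k' j * φ l := by
    intro l k' j
    have s1 := hsym (Fin.natAdd n j) (Fin.castAdd m l) (Fin.natAdd n k')
    have s2 := hsym' (Fin.natAdd n j) (Fin.castAdd m l) (Fin.natAdd n k')
    rw [s1, s2, hA]
  -- Γλ^β_ξ = Γ'λ^β_ξ + δ^β_ξ φ_λ + δ^β_λ φ_ξ
  have hC : ∀ (l x b : Fin n),
      Γ (Fin.castAdd m l) (Fin.castAdd m b) (Fin.castAdd m x)
        = Γ' (Fin.castAdd m l) (Fin.castAdd m b) (Fin.castAdd m x)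
          + kdelta b x * φ l + kdelta b l * φ x := by
    intro l x b
    have h := h2 l x b i0 i0
    rw [hdd'] at h
    have a1 := hA l i0 i0
    rw [hdd'] at a1
    have a2 := hA x i0 i0
    rw [hdd'] at a2
    have s1 := hsym (Fin.natAdd n i0) (Fin.castAdd m x) (Fin.natAdd n i0)
    have s2 := hsym' (Fin.natAdd n i0) (Fin.castAdd m x) (Fin.natAdd n i0)
    linear_combination -h + kdelta b x * a1 + kdelta b l * a2 + kdelta b l * s1
      - kdelta b l * s2
  -- key relation R from h3
  have hR : ∀ (l b : Fin n) (i : Fin m),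
      (Γ (Fin.castAdd m l) (Fin.castAdd m b) (Fin.natAdd n i)
        - Γ' (Fin.castAdd m l) (Fin.castAdd m b) (Fin.natAdd n i))
      + kdelta i0 i * (Γ (Fin.castAdd m l) (Fin.castAdd m b) (Fin.natAdd n i0)
        - Γ' (Fin.castAdd m l) (Fin.castAdd m b) (Fin.natAdd n i0))
      = kdelta b l * E i := by
    intro l b i
    have h := h3 l l l b i i0 i0
    rw [hdd, hdd'] at h
    have s1 := hsym (Fin.natAdd n i) (Fin.castAdd m l) (Fin.castAdd m b)
    have s2 := hsym' (Fin.natAdd n i) (Fin.castAdd m l) (Fin.castAdd m b)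
    have s3 := hsym (Fin.natAdd n i0) (Fin.castAdd m l) (Fin.castAdd m b)
    have s4 := hsym' (Fin.natAdd n i0) (Fin.castAdd m l) (Fin.castAdd m b)
    simp only [hE0]
    linear_combination -h / 2 - s1 / 2 + s2 / 2 - kdelta i0 i * s3 / 2
      + kdelta i0 i * s4 / 2
  -- Γλ^β_i = Γ'λ^β_i + δ^β_λ ψ_i
  have hG : ∀ (l b : Fin n) (i : Fin m),
      Γ (Fin.castAdd m l) (Fin.castAdd m b) (Fin.natAdd n i)
        = Γ' (Fin.castAdd m l) (Fin.castAdd m b) (Fin.natAdd n i) + kdelta b l * ψ i := by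
    intro l b i
    have r1 := hR l b i
    have r2 := hR l b i0
    rw [hdd'] at r2
    simp only [hψ]
    linear_combination r1 - kdelta i0 i / 2 * r2
  have hG2 : ∀ (l b : Fin n) (j : Fin m),
      Γ (Fin.natAdd n j) (Fin.castAdd m b) (Fin.castAdd m l)
        = Γ' (Fin.natAdd n j) (Fin.castAdd m b) (Fin.castAdd m l) + kdelta b l * ψ j := by
    intro l b j
    have s1 := hsym (Fin.natAdd n j) (Fin.castAdd m l) (Fin.castAdd m b)
    have s2 := hsym' (Fin.natAdd n j) (Fin.castAdd m l) (Fin.castAdd m b)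
    rw [s1, s2, hG]
  -- Γj^k_i = Γ'j^k_i + δ^k_j ψ_i + δ^k_i ψ_j
  have hEE : ∀ (j k' i : Fin m),
      Γ (Fin.natAdd n j) (Fin.natAdd n k') (Fin.natAdd n i)
        = Γ' (Fin.natAdd n j) (Fin.natAdd n k') (Fin.natAdd n i)
          + kdelta k' j * ψ i + kdelta k' i * ψ j := by
    intro j k' i
    have h := h3 l0 l0 l0 l0 i j k'
    rw [hdd] at h
    have g1 := hG l0 l0 i
    rw [hdd] at g1
    have g2 := hG l0 l0 j
    rw [hdd] at g2
    have s1 := hsym (Fin.natAdd n i) (Fin.castAdd m l0) (Fin.castAdd m l0)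
    have s2 := hsym' (Fin.natAdd n i) (Fin.castAdd m l0) (Fin.castAdd m l0)
    have s3 := hsym (Fin.natAdd n j) (Fin.castAdd m l0) (Fin.castAdd m l0)
    have s4 := hsym' (Fin.natAdd n j) (Fin.castAdd m l0) (Fin.castAdd m l0)
    linear_combination h / 2 + kdelta k' j * g1 + kdelta k' i * g2
      + kdelta k' j * s1 / 2 - kdelta k' j * s2 / 2
      + kdelta k' i * s3 / 2 - kdelta k' i * s4 / 2
  -- expand P term by term
  have T2 : (∑ i, Γ (Fin.castAdd m lam) (Fin.natAdd n k) (Fin.natAdd n i) * u i ξ)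
      = (∑ i, Γ' (Fin.castAdd m lam) (Fin.natAdd n k) (Fin.natAdd n i) * u i ξ)
        + φ lam * u k ξ := by
    have e : ∀ i ∈ (Finset.univ : Finset (Fin m)),
        Γ (Fin.castAdd m lam) (Fin.natAdd n k) (Fin.natAdd n i) * u i ξ
        = Γ' (Fin.castAdd m lam) (Fin.natAdd n k) (Fin.natAdd n i) * u i ξ
          + (if k = i then φ lam * u i ξ else 0) := by
      intro i _
      rw [hA lam k i]
      simp only [kdelta]
      split <;> ring
    rw [Finset.sum_congr rfl e, Finset.sum_add_distrib, Finset.sum_ite_eq]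
    simp
  have T3 : (∑ j, Γ (Fin.natAdd n j) (Fin.natAdd n k) (Fin.castAdd m ξ) * u j lam)
      = (∑ j, Γ' (Fin.natAdd n j) (Fin.natAdd n k) (Fin.castAdd m ξ) * u j lam)
        + φ ξ * u k lam := by
    have e : ∀ j ∈ (Finset.univ : Finset (Fin m)),
        Γ (Fin.natAdd n j) (Fin.natAdd n k) (Fin.castAdd m ξ) * u j lam
        = Γ' (Fin.natAdd n j) (Fin.natAdd n k) (Fin.castAdd m ξ) * u j lam
          + (if k = j then φ ξ * u j lam else 0) := by
      intro j _
      rw [hB ξ k j]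
      simp only [kdelta]
      split <;> ring
    rw [Finset.sum_congr rfl e, Finset.sum_add_distrib, Finset.sum_ite_eq]
    simp
  have T4 : (∑ j, ∑ i, Γ (Fin.natAdd n j) (Fin.natAdd n k) (Fin.natAdd n i) * u j lam * u i ξ)
      = (∑ j, ∑ i, Γ' (Fin.natAdd n j) (Fin.natAdd n k) (Fin.natAdd n i) * u j lam * u i ξ)
        + u k lam * (∑ i, ψ i * u i ξ) + u k ξ * (∑ j, ψ j * u j lam) := by
    have e : ∀ j ∈ (Finset.univ : Finset (Fin m)),
        (∑ i, Γ (Fin.natAdd n j) (Fin.natAdd n k) (Fin.natAdd n i) * u j lam * u i ξ)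
        = (∑ i, Γ' (Fin.natAdd n j) (Fin.natAdd n k) (Fin.natAdd n i) * u j lam * u i ξ)
          + (if k = j then u j lam * (∑ i, ψ i * u i ξ) else 0)
          + u k ξ * (ψ j * u j lam) := by
      intro j _
      have e2 : ∀ i ∈ (Finset.univ : Finset (Fin m)),
          Γ (Fin.natAdd n j) (Fin.natAdd n k) (Fin.natAdd n i) * u j lam * u i ξ
          = Γ' (Fin.natAdd n j) (Fin.natAdd n k) (Fin.natAdd n i) * u j lam * u i ξ
            + (if k = j then u j lam * (ψ i * u i ξ) else 0)
            + (if k = i then ψ j * u j lam * u i ξ else 0) := by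
        intro i _
        rw [hEE j k i]
        simp only [kdelta]
        split <;> split <;> ring
      rw [Finset.sum_congr rfl e2, Finset.sum_add_distrib, Finset.sum_add_distrib,
        Finset.sum_ite_eq, Finset.sum_ite_irrel, Finset.sum_const_zero,
        ← Finset.mul_sum]
      simp only [Finset.mem_univ, if_true]
      ring
    rw [Finset.sum_congr rfl e, Finset.sum_add_distrib, Finset.sum_add_distrib,
      Finset.sum_ite_eq, ← Finset.mul_sum]
    simp only [Finset.mem_univ, if_true]
  have T5 : (∑ β, u k β *
        (Γ (Fin.castAdd m lam) (Fin.castAdd m β) (Fin.castAdd m ξ)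
          + ∑ i, Γ (Fin.castAdd m lam) (Fin.castAdd m β) (Fin.natAdd n i) * u i ξ
          + ∑ j, Γ (Fin.natAdd n j) (Fin.castAdd m β) (Fin.castAdd m ξ) * u j lam
          + ∑ j, ∑ i, Γ (Fin.natAdd n j) (Fin.castAdd m β) (Fin.natAdd n i) * u j lam * u i ξ))
      = (∑ β, u k β *
        (Γ' (Fin.castAdd m lam) (Fin.castAdd m β) (Fin.castAdd m ξ)
          + ∑ i, Γ' (Fin.castAdd m lam) (Fin.castAdd m β) (Fin.natAdd n i) * u i ξ
          + ∑ j, Γ' (Fin.natAdd n j) (Fin.castAdd m β) (Fin.castAdd m ξ) * u j lam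
          + ∑ j, ∑ i, Γ' (Fin.natAdd n j) (Fin.castAdd m β) (Fin.natAdd n i) * u j lam * u i ξ))
        + φ lam * u k ξ + φ ξ * u k lam
        + u k lam * (∑ i, ψ i * u i ξ) + u k ξ * (∑ j, ψ j * u j lam) := by
    have e : ∀ β ∈ (Finset.univ : Finset (Fin n)),
        u k β *
          (Γ (Fin.castAdd m lam) (Fin.castAdd m β) (Fin.castAdd m ξ)
            + ∑ i, Γ (Fin.castAdd m lam) (Fin.castAdd m β) (Fin.natAdd n i) * u i ξ
            + ∑ j, Γ (Fin.natAdd n j) (Fin.castAdd m β) (Fin.castAdd m ξ) * u j lam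
            + ∑ j, ∑ i, Γ (Fin.natAdd n j) (Fin.castAdd m β) (Fin.natAdd n i) * u j lam * u i ξ)
        = u k β *
          (Γ' (Fin.castAdd m lam) (Fin.castAdd m β) (Fin.castAdd m ξ)
            + ∑ i, Γ' (Fin.castAdd m lam) (Fin.castAdd m β) (Fin.natAdd n i) * u i ξ
            + ∑ j, Γ' (Fin.natAdd n j) (Fin.castAdd m β) (Fin.castAdd m ξ) * u j lam
            + ∑ j, ∑ i, Γ' (Fin.natAdd n j) (Fin.castAdd m β) (Fin.natAdd n i) * u j lam * u i ξ)
          + (if β = ξ then φ lam * u k β else 0)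
          + (if β = lam then φ ξ * u k β else 0)
          + (if β = lam then u k β * (∑ i, ψ i * u i ξ) else 0)
          + (if β = ξ then u k β * (∑ j, ψ j * u j lam) else 0) := by
      intro β _
      have i1 : (∑ i, Γ (Fin.castAdd m lam) (Fin.castAdd m β) (Fin.natAdd n i) * u i ξ)
          = (∑ i, Γ' (Fin.castAdd m lam) (Fin.castAdd m β) (Fin.natAdd n i) * u i ξ)
            + kdelta β lam * (∑ i, ψ i * u i ξ) := by
        have e2 : ∀ i ∈ (Finset.univ : Finset (Fin m)),
            Γ (Fin.castAdd m lam) (Fin.castAdd m β) (Fin.natAdd n i) * u i ξ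
            = Γ' (Fin.castAdd m lam) (Fin.castAdd m β) (Fin.natAdd n i) * u i ξ
              + kdelta β lam * (ψ i * u i ξ) :=
          fun i _ => by rw [hG lam β i]; ring
        rw [Finset.sum_congr rfl e2, Finset.sum_add_distrib, ← Finset.mul_sum]
      have i2 : (∑ j, Γ (Fin.natAdd n j) (Fin.castAdd m β) (Fin.castAdd m ξ) * u j lam)
          = (∑ j, Γ' (Fin.natAdd n j) (Fin.castAdd m β) (Fin.castAdd m ξ) * u j lam)
            + kdelta β ξ * (∑ j, ψ j * u j lam) := by
        have e2 : ∀ j ∈ (Finset.univ : Finset (Fin m)),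
            Γ (Fin.natAdd n j) (Fin.castAdd m β) (Fin.castAdd m ξ) * u j lam
            = Γ' (Fin.natAdd n j) (Fin.castAdd m β) (Fin.castAdd m ξ) * u j lam
              + kdelta β ξ * (ψ j * u j lam) :=
          fun j _ => by rw [hG2 ξ β j]; ring
        rw [Finset.sum_congr rfl e2, Finset.sum_add_distrib, ← Finset.mul_sum]
      have i3 : (∑ j, ∑ i, Γ (Fin.natAdd n j) (Fin.castAdd m β) (Fin.natAdd n i) * u j lam * u i ξ)
          = (∑ j, ∑ i, Γ' (Fin.natAdd n j) (Fin.castAdd m β) (Fin.natAdd n i) * u j lam * u i ξ) :=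
        Finset.sum_congr rfl fun j _ => Finset.sum_congr rfl fun i _ => by rw [h4 β i j]
      rw [hC lam ξ β, i1, i2, i3]
      simp only [kdelta]
      split <;> split <;> ring
    rw [Finset.sum_congr rfl e, Finset.sum_add_distrib, Finset.sum_add_distrib,
      Finset.sum_add_distrib, Finset.sum_add_distrib,
      Finset.sum_ite_eq', Finset.sum_ite_eq', Finset.sum_ite_eq', Finset.sum_ite_eq']
    simp only [Finset.mem_univ, if_true]
  simp only [P]
  rw [h1 lam ξ k, T2, T3, T4, T5]
  ring
end

section
/- Let n, N ≥ 1 and Γ : Fin N → Fin N → Fin N → ℝ. Suppose s : ℝⁿ → ℝ^N is twice differentiable and satisfies ∂²s^C/∂x^ξ∂x^λ + ∑_{A,B} Γ_A^C_B(s(x)) (∂s^A/∂x^ξ)(∂s^B/∂x^λ) = 0 for all ξ, λ, C (parametrized totally geodesic with flat parameter connection). Suppose moreover that in the divided coordinates (u^λ, u^i) on ℝ^N = ℝⁿ × ℝ^{N-n}, the first n components σ = (s¹, …, sⁿ) : ℝⁿ → ℝⁿ form a diffeomorphism near a point, with local inverse σ⁻¹. Then the graph function f = (s^{n+1}, …,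 s^N) ∘ σ⁻¹ : ℝⁿ → ℝ^{N-n} satisfies the unparametrized totally geodesic equation: ∂²f^k/∂u^λ∂u^ξ + Γ_λ^k_ξ + ∑_i Γ_λ^k_i ∂f^i/∂u^ξ + ∑_j Γ_j^k_ξ ∂f^j/∂u^λ + ∑_{i,j} Γ_j^k_i (∂f^j/∂u^λ)(∂f^i/∂u^ξ) - ∑_β (∂f^k/∂u^β)(Γ_λ^β_ξ + ∑_i Γ_λ^β_i ∂f^i/∂u^ξ + ∑_j Γ_j^β_ξ ∂f^j/∂u^λ + ∑_{i,j} Γ_j^β_i (∂f^j/∂u^λ)(∂f^i/∂u^ξ)) = 0, where all Christoffel symbols are evaluated at the corresponding point (u, f(u)); here Greek indices λ, ξ, β ∈ Fin n and Latin indices i, j, k range over the last N - n coordinates. -/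
open scoped BigOperators

/-- Partial derivative of `f` in the coordinate direction `ξ`. -/
noncomputable def pd {n N : ℕ} (f : (Fin n → ℝ) → (Fin N → ℝ))
    (ξ : Fin n) (x : Fin n → ℝ) : Fin N → ℝ :=
  fderiv ℝ f x (Pi.single ξ 1)

/-- Second partial derivative of `f`, first in direction `η`, then `ξ`. -/
noncomputable def pd2 {n N : ℕ} (f : (Fin n → ℝ) → (Fin N → ℝ))
    (ξ η : Fin n) (x : Fin n → ℝ) : Fin N → ℝ :=
  fderiv ℝ (fun y => pd f η y) x (Pi.single ξ 1)

lemma clm_eval {p : ℕ} (L : (Fin p → ℝ) →L[ℝ] ℝ) (w : Fin p → ℝ) :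
    L w = ∑ μ, w μ * L (Pi.single μ 1) := by
  conv_lhs => rw [← Finset.univ_sum_single w]
  rw [map_sum]
  refine Finset.sum_congr rfl fun μ _ => ?_
  have h : Pi.single μ (w μ) = w μ • (Pi.single μ 1 : Fin p → ℝ) := by
    rw [← Pi.single_smul, smul_eq_mul, mul_one]
  rw [h, map_smul, smul_eq_mul]

lemma fderiv_eval {p q : ℕ} {f : (Fin p → ℝ) → (Fin q → ℝ)} {x : Fin p → ℝ}
    (hf : DifferentiableAt ℝ f x) (v : Fin p → ℝ) (C : Fin q) :
    fderiv ℝ f x v C = fderiv ℝ (fun y => f y C) x v := by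
  have h := (ContinuousLinearMap.proj (R := ℝ) (φ := fun _ : Fin q => ℝ) C).hasFDerivAt.comp x
    hf.hasFDerivAt
  have h2 : fderiv ℝ (fun y => f y C) x
      = (ContinuousLinearMap.proj (R := ℝ) (φ := fun _ : Fin q => ℝ) C).comp (fderiv ℝ f x) :=
    h.fderiv
  rw [h2]; rfl

lemma contDiff_fderiv_apply {p q : ℕ} {f : (Fin p → ℝ) → (Fin q → ℝ)}
    (hf : ContDiff ℝ 2 f) (v : Fin p → ℝ) :
    ContDiff ℝ 1 (fun y => fderiv ℝ f y v) := by
  have h : ContDiff ℝ 1 (fderiv ℝ f) := hf.fderiv_right (by norm_num)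
  exact h.clm_apply contDiff_const

lemma contDiff_fderiv_apply' {p : ℕ} {f : (Fin p → ℝ) → ℝ}
    (hf : ContDiff ℝ 2 f) (v : Fin p → ℝ) :
    ContDiff ℝ 1 (fun y => fderiv ℝ f y v) := by
  have h : ContDiff ℝ 1 (fderiv ℝ f) := hf.fderiv_right (by norm_num)
  exact h.clm_apply contDiff_const

lemma chain1 {p q : ℕ} {g : (Fin q → ℝ) → ℝ} {τ : (Fin p → ℝ) → (Fin q → ℝ)}
    (hg : Differentiable ℝ g) (hτ : Differentiable ℝ τ) (y : Fin p → ℝ) (v : Fin p → ℝ) :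
    fderiv ℝ (fun z => g (τ z)) y v
      = ∑ μ, fderiv ℝ τ y v μ * fderiv ℝ g (τ y) (Pi.single μ 1) := by
  have h : fderiv ℝ (fun z => g (τ z)) y = (fderiv ℝ g (τ y)).comp (fderiv ℝ τ y) :=
    fderiv_comp y (hg _) (hτ y)
  rw [h, ContinuousLinearMap.comp_apply]
  exact clm_eval _ _

lemma chain2 {p q : ℕ} {g : (Fin q → ℝ) → ℝ} {τ : (Fin p → ℝ) → (Fin q → ℝ)}
    (hg : ContDiff ℝ 2 g) (hτ : ContDiff ℝ 2 τ) (y : Fin p → ℝ) (u v : Fin p → ℝ) :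
    fderiv ℝ (fun z => fderiv ℝ (fun w => g (τ w)) z u) y v
      = ∑ μ, (fderiv ℝ (fun z => fderiv ℝ τ z u μ) y v * fderiv ℝ g (τ y) (Pi.single μ 1)
          + fderiv ℝ τ y u μ *
            ∑ ν, fderiv ℝ τ y v ν *
              fderiv ℝ (fun x => fderiv ℝ g x (Pi.single μ 1)) (τ y) (Pi.single ν 1)) := by
  have hgd : Differentiable ℝ g := hg.differentiable (by norm_num)
  have hτd : Differentiable ℝ τ := hτ.differentiable (by norm_num)
  have hDτ : Differentiable ℝ (fun z => fderiv ℝ τ z u) :=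
    ((hτ.fderiv_right (m := 1) (by norm_num)).clm_apply contDiff_const).differentiable one_ne_zero
  have hDτμ : ∀ μ : Fin q, Differentiable ℝ (fun z => fderiv ℝ τ z u μ) := fun μ =>
    (ContinuousLinearMap.proj (R := ℝ) (φ := fun _ : Fin q => ℝ) μ).differentiable.comp hDτ
  have hDg : ∀ μ : Fin q, Differentiable ℝ (fun x => fderiv ℝ g x (Pi.single μ 1)) := fun μ =>
    ((hg.fderiv_right (m := 1) (by norm_num)).clm_apply contDiff_const).differentiable one_ne_zero
  have hb : ∀ μ : Fin q, Differentiable ℝ (fun z => fderiv ℝ g (τ z) (Pi.single μ 1)) :=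
    fun μ => (hDg μ).comp hτd
  have hfun : (fun z => fderiv ℝ (fun w => g (τ w)) z u)
      = fun z => ∑ μ, fderiv ℝ τ z u μ * fderiv ℝ g (τ z) (Pi.single μ 1) := by
    funext z
    exact chain1 hgd hτd z u
  rw [hfun]
  have hsum : fderiv ℝ (fun z => ∑ μ, fderiv ℝ τ z u μ * fderiv ℝ g (τ z) (Pi.single μ 1)) y
      = ∑ μ, fderiv ℝ (fun z => fderiv ℝ τ z u μ * fderiv ℝ g (τ z) (Pi.single μ 1)) y :=
    fderiv_fun_sum fun μ _ => ((hDτμ μ) y).mul ((hb μ) y)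
  rw [hsum, ContinuousLinearMap.sum_apply]
  refine Finset.sum_congr rfl fun μ _ => ?_
  have hmul : fderiv ℝ (fun z => fderiv ℝ τ z u μ * fderiv ℝ g (τ z) (Pi.single μ 1)) y
      = fderiv ℝ τ y u μ • fderiv ℝ (fun z => fderiv ℝ g (τ z) (Pi.single μ 1)) y
        + fderiv ℝ g (τ y) (Pi.single μ 1) • fderiv ℝ (fun z => fderiv ℝ τ z u μ) y :=
    fderiv_mul ((hDτμ μ) y) ((hb μ) y)
  rw [hmul]
  have hch : fderiv ℝ (fun z => fderiv ℝ g (τ z) (Pi.single μ 1)) y v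
      = ∑ ν, fderiv ℝ τ y v ν *
          fderiv ℝ (fun x => fderiv ℝ g x (Pi.single μ 1)) (τ y) (Pi.single ν 1) :=
    chain1 (hDg μ) hτd y v
  simp only [ContinuousLinearMap.add_apply, ContinuousLinearMap.smul_apply, smul_eq_mul]
  rw [hch]
  ring

lemma sum3_swap {α β γ : Type*} [Fintype α] [Fintype β] [Fintype γ] (h : α → β → γ → ℝ) :
    ∑ ν : α, ∑ A : β, ∑ B : γ, h ν A B = ∑ A, ∑ B, ∑ ν, h ν A B := by
  rw [Finset.sum_comm]
  exact Finset.sum_congr rfl fun A _ => Finset.sum_comm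

lemma rearr {n N : ℕ} (T : Fin n → Fin n → ℝ) (S : Fin N → Fin n → ℝ)
    (c : Fin N → Fin N → ℝ) (l x : Fin n) :
    ∑ μ, T μ x * ∑ ν, T ν l * (∑ A, ∑ B, c A B * S A ν * S B μ)
      = ∑ A, ∑ B, c A B * (∑ ν, T ν l * S A ν) * (∑ μ, T μ x * S B μ) := by
  have step1 : ∀ μ, ∑ ν, T ν l * (∑ A, ∑ B, c A B * S A ν * S B μ)
      = ∑ A, ∑ B, (∑ ν, T ν l * S A ν) * (c A B * S B μ) := by
    intro μ
    calc ∑ ν, T ν l * ∑ A, ∑ B, c A B * S A ν * S B μ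
        = ∑ ν, ∑ A, ∑ B, T ν l * (c A B * S A ν * S B μ) := by
          simp only [Finset.mul_sum]
      _ = ∑ A, ∑ B, ∑ ν, T ν l * (c A B * S A ν * S B μ) := sum3_swap _
      _ = ∑ A, ∑ B, (∑ ν, T ν l * S A ν) * (c A B * S B μ) := by
          refine Finset.sum_congr rfl fun A _ => Finset.sum_congr rfl fun B _ => ?_
          rw [Finset.sum_mul]
          exact Finset.sum_congr rfl fun ν _ => by ring
  calc ∑ μ, T μ x * ∑ ν, T ν l * ∑ A, ∑ B, c A B * S A ν * S B μ
      = ∑ μ, ∑ A, ∑ B, T μ x * ((∑ ν, T ν l * S A ν) * (c A B * S B μ)) := by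
        refine Finset.sum_congr rfl fun μ _ => ?_
        rw [step1 μ]; simp only [Finset.mul_sum]
    _ = ∑ A, ∑ B, ∑ μ, T μ x * ((∑ ν, T ν l * S A ν) * (c A B * S B μ)) := sum3_swap _
    _ = ∑ A, ∑ B, c A B * (∑ ν, T ν l * S A ν) * (∑ μ, T μ x * S B μ) := by
        refine Finset.sum_congr rfl fun A _ => Finset.sum_congr rfl fun B _ => ?_
        rw [Finset.mul_sum]
        exact Finset.sum_congr rfl fun μ _ => by ring

lemma H_formula (n m : ℕ)
    (Γ : Fin (n + m) → Fin (n + m) → Fin (n + m) → (Fin (n + m) → ℝ) → ℝ)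
    (s : (Fin n → ℝ) → (Fin (n + m) → ℝ)) (hs : ContDiff ℝ 2 s)
    (heq : ∀ (x : Fin n → ℝ) (ξ lam : Fin n) (C : Fin (n + m)),
      pd2 s ξ lam x C
        + ∑ A, ∑ B, Γ A C B (s x) * pd s ξ x A * pd s lam x B = 0)
    (τ : (Fin n → ℝ) → (Fin n → ℝ)) (hτ : ContDiff ℝ 2 τ)
    (y : Fin n → ℝ) (lam ξ : Fin n) (A : Fin (n + m)) :
    fderiv ℝ (fun z => fderiv ℝ (fun w => s (τ w) A) z (Pi.single ξ 1)) y (Pi.single lam 1)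
      = (∑ μ, fderiv ℝ (fun z => fderiv ℝ τ z (Pi.single ξ 1) μ) y (Pi.single lam 1)
              * fderiv ℝ (fun x => s x A) (τ y) (Pi.single μ 1))
        - ∑ A', ∑ B, Γ A' A B (s (τ y))
              * fderiv ℝ (fun z => s (τ z) A') y (Pi.single lam 1)
              * fderiv ℝ (fun z => s (τ z) B) y (Pi.single ξ 1) := by
  have hsd : Differentiable ℝ s := hs.differentiable (by norm_num)
  have hτd : Differentiable ℝ τ := hτ.differentiable (by norm_num)
  have hgd : ∀ C : Fin (n + m), ContDiff ℝ 2 (fun x => s x C) := fun C =>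
    (ContinuousLinearMap.proj (R := ℝ) (φ := fun _ : Fin (n + m) => ℝ) C).contDiff.comp hs
  have hpd_s : ∀ (x : Fin n → ℝ) (ν : Fin n) (C : Fin (n + m)),
      pd s ν x C = fderiv ℝ (fun w => s w C) x (Pi.single ν 1) := fun x ν C =>
    fderiv_eval (hsd x) _ _
  have hDs : ∀ v, Differentiable ℝ (fun z => fderiv ℝ s z v) := fun v =>
    (contDiff_fderiv_apply hs v).differentiable one_ne_zero
  have hpd2_s : ∀ (x : Fin n → ℝ) (ν μ : Fin n) (C : Fin (n + m)),
      pd2 s ν μ x C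
        = fderiv ℝ (fun z => fderiv ℝ (fun w => s w C) z (Pi.single μ 1)) x (Pi.single ν 1) := by
    intro x ν μ C
    have h1 : pd2 s ν μ x C = fderiv ℝ (fun z => pd s μ z C) x (Pi.single ν 1) :=
      fderiv_eval (hDs (Pi.single μ 1) x) _ _
    rw [h1]
    have h2 : (fun z => pd s μ z C) = fun z => fderiv ℝ (fun w => s w C) z (Pi.single μ 1) :=
      funext fun z => hpd_s z μ C
    rw [h2]
  have hgeo : ∀ (ν μ : Fin n),
      fderiv ℝ (fun x => fderiv ℝ (fun w => s w A) x (Pi.single μ 1)) (τ y) (Pi.single ν 1)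
        = -(∑ A', ∑ B, Γ A' A B (s (τ y))
              * fderiv ℝ (fun w => s w A') (τ y) (Pi.single ν 1)
              * fderiv ℝ (fun w => s w B) (τ y) (Pi.single μ 1)) := by
    intro ν μ
    have h := heq (τ y) ν μ A
    rw [hpd2_s] at h
    simp only [hpd_s] at h
    linarith
  rw [chain2 (hgd A) hτ y (Pi.single ξ 1) (Pi.single lam 1)]
  simp only [hgeo]
  simp only [mul_neg, Finset.sum_neg_distrib, ← sub_eq_add_neg, Finset.sum_sub_distrib]
  congr 1
  rw [rearr (fun μ β => fderiv ℝ τ y (Pi.single β 1) μ)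
      (fun A' ν => fderiv ℝ (fun w => s w A') (τ y) (Pi.single ν 1))
      (fun A' B => Γ A' A B (s (τ y))) lam ξ]
  refine Finset.sum_congr rfl fun A' _ => Finset.sum_congr rfl fun B _ => ?_
  rw [← chain1 ((hgd A').differentiable (by norm_num)) hτd y (Pi.single lam 1),
      ← chain1 ((hgd B).differentiable (by norm_num)) hτd y (Pi.single ξ 1)]


lemma assembly (n m : ℕ) (c : Fin (n + m) → Fin (n + m) → Fin (n + m) → ℝ)
    (G S : Fin (n + m) → Fin n → ℝ) (T : Fin n → Fin n → ℝ) (Q : Fin n → ℝ)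
    (H : Fin (n + m) → ℝ) (lam ξ : Fin n) (k : Fin m)
    (hH : ∀ A, H A = (∑ μ, Q μ * S A μ) - ∑ A', ∑ B, c A' A B * G A' lam * G B ξ)
    (hG : ∀ A β, G A β = ∑ μ, T μ β * S A μ)
    (hGc : ∀ β ζ : Fin n, G (Fin.castAdd m β) ζ = if β = ζ then 1 else 0)
    (hHc : ∀ β : Fin n, H (Fin.castAdd m β) = 0) :
    H (Fin.natAdd n k)
      + c (Fin.castAdd m lam) (Fin.natAdd n k) (Fin.castAdd m ξ)
      + (∑ i, c (Fin.castAdd m lam) (Fin.natAdd n k) (Fin.natAdd n i) * G (Fin.natAdd n i) ξ)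
      + (∑ j, c (Fin.natAdd n j) (Fin.natAdd n k) (Fin.castAdd m ξ) * G (Fin.natAdd n j) lam)
      + (∑ j, ∑ i, c (Fin.natAdd n j) (Fin.natAdd n k) (Fin.natAdd n i)
          * G (Fin.natAdd n j) lam * G (Fin.natAdd n i) ξ)
      - (∑ β, G (Fin.natAdd n k) β *
          (c (Fin.castAdd m lam) (Fin.castAdd m β) (Fin.castAdd m ξ)
            + (∑ i, c (Fin.castAdd m lam) (Fin.castAdd m β) (Fin.natAdd n i) * G (Fin.natAdd n i) ξ)
            + (∑ j, c (Fin.natAdd n j) (Fin.castAdd m β) (Fin.castAdd m ξ) * G (Fin.natAdd n j) lam)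
            + (∑ j, ∑ i, c (Fin.natAdd n j) (Fin.castAdd m β) (Fin.natAdd n i)
                * G (Fin.natAdd n j) lam * G (Fin.natAdd n i) ξ))) = 0 := by
  -- the splitting of the double sum over Fin (n+m) into the four groups
  have hsplit : ∀ C : Fin (n + m),
      (∑ A', ∑ B, c A' C B * G A' lam * G B ξ)
        = c (Fin.castAdd m lam) C (Fin.castAdd m ξ)
          + (∑ i, c (Fin.castAdd m lam) C (Fin.natAdd n i) * G (Fin.natAdd n i) ξ)
          + (∑ j, c (Fin.natAdd n j) C (Fin.castAdd m ξ) * G (Fin.natAdd n j) lam)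
          + (∑ j, ∑ i, c (Fin.natAdd n j) C (Fin.natAdd n i)
              * G (Fin.natAdd n j) lam * G (Fin.natAdd n i) ξ) := by
    intro C
    simp only [Fin.sum_univ_add, hGc, mul_ite, ite_mul, mul_one, mul_zero, zero_mul,
      Finset.sum_ite_irrel, Finset.sum_const_zero,
      Finset.sum_ite_eq', Finset.mem_univ, if_true, Finset.sum_add_distrib]
    ring
  -- the matrix inversion step
  have hQ : ∀ μ, Q μ = ∑ β, T μ β *
      (∑ A', ∑ B, c A' (Fin.castAdd m β) B * G A' lam * G B ξ) := by
    set M : Matrix (Fin n) (Fin n) ℝ := Matrix.of fun β μ => S (Fin.castAdd m β) μ with hM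
    set Tm : Matrix (Fin n) (Fin n) ℝ := Matrix.of fun μ β => T μ β with hTm
    have hMT : M * Tm = 1 := by
      ext β ζ
      rw [Matrix.mul_apply, Matrix.one_apply]
      have h := hG (Fin.castAdd m β) ζ
      rw [hGc] at h
      rw [h]
      exact Finset.sum_congr rfl fun μ _ => by simp [hM, hTm, mul_comm]
    have hTM : Tm * M = 1 := mul_eq_one_comm.mp hMT
    have hMQ : M.mulVec Q
        = fun β => ∑ A', ∑ B, c A' (Fin.castAdd m β) B * G A' lam * G B ξ := by
      funext β
      have h0 := hHc β
      rw [hH] at h0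
      have h1 : M.mulVec Q β = ∑ μ, Q μ * S (Fin.castAdd m β) μ := by
        simp [Matrix.mulVec, dotProduct, hM, mul_comm]
      rw [h1]
      linarith
    intro μ
    have h2 : Tm.mulVec (fun β => ∑ A', ∑ B, c A' (Fin.castAdd m β) B * G A' lam * G B ξ) = Q := by
      rw [← hMQ, Matrix.mulVec_mulVec, hTM, Matrix.one_mulVec]
    have h3 := congrFun h2 μ
    rw [← h3]
    simp [Matrix.mulVec, dotProduct, hTm]
  -- substitute and reorder
  have hQS : (∑ μ, Q μ * S (Fin.natAdd n k) μ)
      = ∑ β, G (Fin.natAdd n k) β *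
          (∑ A', ∑ B, c A' (Fin.castAdd m β) B * G A' lam * G B ξ) := by
    calc ∑ μ, Q μ * S (Fin.natAdd n k) μ
        = ∑ μ, ∑ β, (T μ β * S (Fin.natAdd n k) μ) *
            (∑ A', ∑ B, c A' (Fin.castAdd m β) B * G A' lam * G B ξ) := by
          refine Finset.sum_congr rfl fun μ _ => ?_
          rw [hQ μ, Finset.sum_mul]
          exact Finset.sum_congr rfl fun β _ => by ring
      _ = ∑ β, ∑ μ, (T μ β * S (Fin.natAdd n k) μ) *
            (∑ A', ∑ B, c A' (Fin.castAdd m β) B * G A' lam * G B ξ) := Finset.sum_comm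
      _ = ∑ β, G (Fin.natAdd n k) β *
            (∑ A', ∑ B, c A' (Fin.castAdd m β) B * G A' lam * G B ξ) := by
          refine Finset.sum_congr rfl fun β _ => ?_
          rw [← Finset.sum_mul, ← hG]
  have hbr : ∀ β : Fin n,
      (c (Fin.castAdd m lam) (Fin.castAdd m β) (Fin.castAdd m ξ)
        + (∑ i, c (Fin.castAdd m lam) (Fin.castAdd m β) (Fin.natAdd n i) * G (Fin.natAdd n i) ξ)
        + (∑ j, c (Fin.natAdd n j) (Fin.castAdd m β) (Fin.castAdd m ξ) * G (Fin.natAdd n j) lam)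
        + (∑ j, ∑ i, c (Fin.natAdd n j) (Fin.castAdd m β) (Fin.natAdd n i)
            * G (Fin.natAdd n j) lam * G (Fin.natAdd n i) ξ))
        = ∑ A', ∑ B, c A' (Fin.castAdd m β) B * G A' lam * G B ξ :=
    fun β => (hsplit (Fin.castAdd m β)).symm
  simp only [hbr]
  have h5 := hH (Fin.natAdd n k)
  have h6 := hsplit (Fin.natAdd n k)
  rw [hQS] at h5
  linarith


/-- A parametrized totally geodesic submanifold, rewritten locally as a graph
over the first `n` divided coordinates, solves the unparametrized totally
geodesic equation (local content of the covering theorem). -/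
theorem parametrized_geodesic_covers_unparametrized
    (n m : ℕ) (hn : 1 ≤ n) (hm : 1 ≤ m)
    (Γ : Fin (n + m) → Fin (n + m) → Fin (n + m) → (Fin (n + m) → ℝ) → ℝ)
    (s : (Fin n → ℝ) → (Fin (n + m) → ℝ)) (hs : ContDiff ℝ 2 s)
    (heq : ∀ (x : Fin n → ℝ) (ξ lam : Fin n) (C : Fin (n + m)),
      pd2 s ξ lam x C
        + ∑ A, ∑ B, Γ A C B (s x) * pd s ξ x A * pd s lam x B = 0)
    -- `σ`, the first `n` components of `s`, is a local diffeomorphism with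
    -- local inverse `τ` between the open sets `U` and `V`
    (τ : (Fin n → ℝ) → (Fin n → ℝ)) (hτ : ContDiff ℝ 2 τ)
    (U V : Set (Fin n → ℝ)) (hU : IsOpen U) (hV : IsOpen V)
    (hτV : ∀ y ∈ V, τ y ∈ U)
    (hστ : ∀ y ∈ V, (fun lam => s (τ y) (Fin.castAdd m lam)) = y)
    (hτσ : ∀ x ∈ U, τ (fun lam => s x (Fin.castAdd m lam)) = x) :
    -- the graph function `f = (s^{n+1},…,s^N) ∘ σ⁻¹` solves the
    -- unparametrized totally geodesic equation on `V`
    ∀ y ∈ V, ∀ (k : Fin m) (lam ξ : Fin n),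
      pd2 (fun z k' => s (τ z) (Fin.natAdd n k')) lam ξ y k
        + Γ (Fin.castAdd m lam) (Fin.natAdd n k) (Fin.castAdd m ξ) (s (τ y))
        + (∑ i, Γ (Fin.castAdd m lam) (Fin.natAdd n k) (Fin.natAdd n i) (s (τ y))
            * pd (fun z k' => s (τ z) (Fin.natAdd n k')) ξ y i)
        + (∑ j, Γ (Fin.natAdd n j) (Fin.natAdd n k) (Fin.castAdd m ξ) (s (τ y))
            * pd (fun z k' => s (τ z) (Fin.natAdd n k')) lam y j)
        + (∑ j, ∑ i, Γ (Fin.natAdd n j) (Fin.natAdd n k) (Fin.natAdd n i) (s (τ y))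
            * pd (fun z k' => s (τ z) (Fin.natAdd n k')) lam y j
            * pd (fun z k' => s (τ z) (Fin.natAdd n k')) ξ y i)
        - (∑ β, pd (fun z k' => s (τ z) (Fin.natAdd n k')) β y k *
            (Γ (Fin.castAdd m lam) (Fin.castAdd m β) (Fin.castAdd m ξ) (s (τ y))
              + (∑ i, Γ (Fin.castAdd m lam) (Fin.castAdd m β) (Fin.natAdd n i) (s (τ y))
                  * pd (fun z k' => s (τ z) (Fin.natAdd n k')) ξ y i)
              + (∑ j, Γ (Fin.natAdd n j) (Fin.castAdd m β) (Fin.castAdd m ξ) (s (τ y))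
                  * pd (fun z k' => s (τ z) (Fin.natAdd n k')) lam y j)
              + (∑ j, ∑ i, Γ (Fin.natAdd n j) (Fin.castAdd m β) (Fin.natAdd n i) (s (τ y))
                  * pd (fun z k' => s (τ z) (Fin.natAdd n k')) lam y j
                  * pd (fun z k' => s (τ z) (Fin.natAdd n k')) ξ y i))) = 0 := by
  intro y hy k lam ξ
  have hτd : Differentiable ℝ τ := hτ.differentiable (by norm_num)
  have hgd : ∀ C : Fin (n + m), ContDiff ℝ 2 (fun x => s x C) := fun C =>
    (ContinuousLinearMap.proj (R := ℝ) (φ := fun _ : Fin (n + m) => ℝ) C).contDiff.comp hs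
  have hFC : ∀ C : Fin (n + m), ContDiff ℝ 2 (fun z => s (τ z) C) := fun C => (hgd C).comp hτ
  have hF' : ContDiff ℝ 2 (fun z (k' : Fin m) => s (τ z) (Fin.natAdd n k')) :=
    contDiff_pi.mpr fun k' => hFC (Fin.natAdd n k')
  have hF'd : Differentiable ℝ (fun z (k' : Fin m) => s (τ z) (Fin.natAdd n k')) :=
    hF'.differentiable (by norm_num)
  -- bridge `pd` to scalar derivatives
  have hpdG : ∀ (z : Fin n → ℝ) (ζ : Fin n) (i : Fin m),
      pd (fun z k' => s (τ z) (Fin.natAdd n k')) ζ z i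
        = fderiv ℝ (fun w => s (τ w) (Fin.natAdd n i)) z (Pi.single ζ 1) :=
    fun z ζ i => fderiv_eval (hF'd z) _ _
  -- bridge `pd2` to scalar second derivatives
  have hpd2H : pd2 (fun z k' => s (τ z) (Fin.natAdd n k')) lam ξ y k
      = fderiv ℝ (fun z => fderiv ℝ (fun w => s (τ w) (Fin.natAdd n k)) z (Pi.single ξ 1)) y
          (Pi.single lam 1) := by
    have hdiff : DifferentiableAt ℝ (fun z => pd (fun z k' => s (τ z) (Fin.natAdd n k')) ξ z) y :=
      ((contDiff_fderiv_apply hF' (Pi.single ξ 1)).differentiable one_ne_zero) y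
    have h1 : pd2 (fun z k' => s (τ z) (Fin.natAdd n k')) lam ξ y k
        = fderiv ℝ (fun z => pd (fun z k' => s (τ z) (Fin.natAdd n k')) ξ z k) y
            (Pi.single lam 1) := fderiv_eval hdiff _ _
    rw [h1]
    have h2 : (fun z => pd (fun z k' => s (τ z) (Fin.natAdd n k')) ξ z k)
        = fun z => fderiv ℝ (fun w => s (τ w) (Fin.natAdd n k)) z (Pi.single ξ 1) :=
      funext fun z => hpdG z ξ k
    rw [h2]
  -- the first `n` components of the graph map are the identity on `V`
  have hGV : ∀ (β : Fin n), ∀ z ∈ V, fderiv ℝ (fun w => s (τ w) (Fin.castAdd m β)) z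
      = ContinuousLinearMap.proj (R := ℝ) (φ := fun _ : Fin n => ℝ) β := by
    intro β z hz
    have hev : (fun w => s (τ w) (Fin.castAdd m β)) =ᶠ[nhds z] (fun w => w β) :=
      Filter.eventuallyEq_of_mem (hV.mem_nhds hz) (fun w hw => congrFun (hστ w hw) β)
    rw [hev.fderiv_eq]
    exact (ContinuousLinearMap.proj (R := ℝ) (φ := fun _ : Fin n => ℝ) β).fderiv
  have hGc : ∀ β ζ : Fin n,
      fderiv ℝ (fun w => s (τ w) (Fin.castAdd m β)) y (Pi.single ζ 1)
        = if β = ζ then 1 else 0 := by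
    intro β ζ
    rw [hGV β y hy]
    simp [Pi.single_apply]
  have hHc : ∀ β : Fin n,
      fderiv ℝ (fun z => fderiv ℝ (fun w => s (τ w) (Fin.castAdd m β)) z (Pi.single ξ 1)) y
        (Pi.single lam 1) = 0 := by
    intro β
    have hev : (fun z => fderiv ℝ (fun w => s (τ w) (Fin.castAdd m β)) z (Pi.single ξ 1))
        =ᶠ[nhds y] (fun _ => (Pi.single ξ 1 : Fin n → ℝ) β) :=
      Filter.eventuallyEq_of_mem (hV.mem_nhds hy) (fun z hz => by rw [hGV β z hz]; rfl)
    rw [hev.fderiv_eq]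
    simp
  have hG : ∀ (A : Fin (n + m)) (β : Fin n),
      fderiv ℝ (fun z => s (τ z) A) y (Pi.single β 1)
        = ∑ μ, fderiv ℝ τ y (Pi.single β 1) μ * fderiv ℝ (fun x => s x A) (τ y) (Pi.single μ 1) :=
    fun A β => chain1 ((hgd A).differentiable (by norm_num)) hτd y _
  have hH := fun A => H_formula n m Γ s hs heq τ hτ y lam ξ A
  simp only [hpd2H, hpdG]
  exact assembly n m (fun A C B => Γ A C B (s (τ y)))
    (fun A β => fderiv ℝ (fun z => s (τ z) A) y (Pi.single β 1))
    (fun A μ => fderiv ℝ (fun x => s x A) (τ y) (Pi.single μ 1))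
    (fun μ β => fderiv ℝ τ y (Pi.single β 1) μ)
    (fun μ => fderiv ℝ (fun z => fderiv ℝ τ z (Pi.single ξ 1) μ) y (Pi.single lam 1))
    (fun A => fderiv ℝ (fun z => fderiv ℝ (fun w => s (τ w) A) z (Pi.single ξ 1)) y
        (Pi.single lam 1))
    lam ξ k hH hG hGc hHc
end
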